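/- arXiv:2509.04227 — 2 statements merged into one kernel-verified Lean document; each statement's English description precedes it below -/
import Mathlib

section
/- Let (a,b) = (a₁a₂⋯, b₁b₂⋯) ∈ W. Then: (i) for each word i₁⋯iₙ ∈ L_{a,b,n} with n ≥ 1 and i₁⋯iₙ ≠ 1^n, there is a unique k with 0 ≤ k < n such that i₁⋯i_k ∈ Q_{a,b,k} and i_{k+1}⋯iₙ = a₁⋯a_{n−k}; (ii) for each word i₁⋯iₙ ∈ L_{a,b,n} with n ≥ 1 and i₁⋯iₙ ≠ 0^n, there is a unique k with 0 ≤ k < n such that i₁⋯i_k ∈ Q_{a,b,k} and i_{k+1}⋯iₙ = b₁⋯b_{n−k}. -/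
open Filter Topology

/-- The base corresponding to a digit: `q0` for digit `0` (`false`), `q1` for digit `1` (`true`). -/
noncomputable def qb (q0 q1 : ℝ) (d : Bool) : ℝ := if d then q1 else q0

/-- `piE q0 q1 i = Σ_{k=1}^∞ i_k / (q_{i_1} ⋯ q_{i_k})`, with 0-based indexing. -/
noncomputable def piE (q0 q1 : ℝ) (i : ℕ → Bool) : ℝ :=
  ∑' k : ℕ, (if i k then (1 : ℝ) else 0) / ∏ j ∈ Finset.range (k + 1), qb q0 q1 (i j)

/-- Strict lexicographic order `≺` on binary sequences. -/
def lexLt (u v : ℕ → Bool) : Prop := ∃ n : ℕ, (∀ m, m < n → u m = v m) ∧ u n < v n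

/-- Non-strict lexicographic order `⪯`. -/
def lexLe (u v : ℕ → Bool) : Prop := lexLt u v ∨ u = v

/-- The tail `i_{n+1} i_{n+2} ⋯` of a sequence (0-based: drop the first `n` entries). -/
def shiftTail (i : ℕ → Bool) (n : ℕ) : ℕ → Bool := fun k => i (n + k)

/-- `Omega a b` : sequences none of whose tails lies in the open lexicographic interval `]a,b[`. -/
def Omega (a b : ℕ → Bool) : Set (ℕ → Bool) :=
  {i | ∀ n : ℕ, ¬ (lexLt a (shiftTail i n) ∧ lexLt (shiftTail i n) b)}

/-- `(a,b) ∈ W` : `a` starts with digit 0, `b` starts with digit 1, and `a, b ∈ Ω_{a,b}`. -/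
def memW (a b : ℕ → Bool) : Prop :=
  a 0 = false ∧ b 0 = true ∧ a ∈ Omega a b ∧ b ∈ Omega a b

/-- The set `L_{a,b,n}` of length-`n` prefixes of elements of `Ω_{a,b}`, as a finset. -/
noncomputable def Lwords (a b : ℕ → Bool) (n : ℕ) : Finset (Fin n → Bool) :=
  Set.Finite.toFinset
    (Set.toFinite {w : Fin n → Bool | ∃ i ∈ Omega a b, ∀ k : Fin n, i k.1 = w k})

/-- Topological entropy `h(Ω_{a,b}) = lim_{n→∞} (1/n) log #L_{a,b,n}`; the limit exists by
subadditivity, hence it coincides with the `limsup` used here. -/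
noncomputable def entropy (a b : ℕ → Bool) : ℝ :=
  Filter.limsup (fun n : ℕ => Real.log ((Lwords a b n).card) / n) Filter.atTop

/-- The concatenation of a finite word `w : Fin n → Bool` with a sequence `x`. -/
def finConcat {n : ℕ} (w : Fin n → Bool) (x : ℕ → Bool) : ℕ → Bool :=
  fun m => if h : m < n then w ⟨m, h⟩ else x (m - n)

/-- `Q_{a,b,n} = {w ∈ L_{a,b,n} : wa ∈ Ω_{a,b} and wb ∈ Ω_{a,b}}`. -/
noncomputable def Qwords (a b : ℕ → Bool) (n : ℕ) : Finset (Fin n → Bool) :=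
  Set.Finite.toFinset (Set.toFinite
    {w : Fin n → Bool | w ∈ Lwords a b n ∧ finConcat w a ∈ Omega a b ∧ finConcat w b ∈ Omega a b})

lemma lexLt_intro {u v : ℕ → Bool} (q : ℕ) (hag : ∀ m, m < q → u m = v m)
    (hu : u q = false) (hv : v q = true) : lexLt u v :=
  ⟨q, hag, by rw [hu, hv]; decide⟩

lemma lexLt_elim {u v : ℕ → Bool} (h : lexLt u v) :
    ∃ q, (∀ m, m < q → u m = v m) ∧ u q = false ∧ v q = true := by
  obtain ⟨q, hag, hlt⟩ := h
  refine ⟨q, hag, ?_, ?_⟩ <;> cases hu : u q <;> cases hv : v q <;>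
    rw [hu, hv] at hlt <;> first | rfl | exact absurd hlt (by decide)

lemma lexLt_asymm {u v : ℕ → Bool} (h1 : lexLt u v) (h2 : lexLt v u) : False := by
  obtain ⟨q1, hag1, hu1, hv1⟩ := lexLt_elim h1
  obtain ⟨q2, hag2, hu2, hv2⟩ := lexLt_elim h2
  rcases lt_trichotomy q1 q2 with h | h | h
  · have := hag2 q1 h; rw [hu1, hv1] at this; exact absurd this (by decide)
  · subst h; rw [hu1] at hv2; exact absurd hv2 (by decide)
  · have := hag1 q2 h; rw [hu2, hv2] at this; exact absurd this (by decide)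

lemma lexLt_trichotomy (u v : ℕ → Bool) : lexLt u v ∨ u = v ∨ lexLt v u := by
  by_cases h : u = v
  · exact Or.inr (Or.inl h)
  · have hne : ∃ n, u n ≠ v n := by
      by_contra hc; push_neg at hc; exact h (funext hc)
    classical
    have hq : u (Nat.find hne) ≠ v (Nat.find hne) := Nat.find_spec hne
    have hag : ∀ m, m < Nat.find hne → u m = v m := fun m hm =>
      not_ne_iff.mp (Nat.find_min hne hm)
    cases hu : u (Nat.find hne) <;> cases hv : v (Nat.find hne)
    · rw [hu, hv] at hq; exact absurd rfl hq
    · exact Or.inl ⟨Nat.find hne, hag, by rw [hu, hv]; decide⟩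
    · exact Or.inr (Or.inr ⟨Nat.find hne, fun m hm => (hag m hm).symm, by rw [hu, hv]; decide⟩)
    · rw [hu, hv] at hq; exact absurd rfl hq

lemma lexLe_of_not_lt {u v : ℕ → Bool} (h : ¬ lexLt u v) : lexLe v u := by
  rcases lexLt_trichotomy u v with h1 | h1 | h1
  · exact absurd h1 h
  · exact Or.inr h1.symm
  · exact Or.inl h1

lemma lexLe_lexLt_false {u v : ℕ → Bool} (h : lexLe u v) (h' : lexLt v u) : False := by
  rcases h with h | h
  · exact lexLt_asymm h h'
  · subst h; obtain ⟨q, -, hq1, hq2⟩ := lexLt_elim h'; rw [hq1] at hq2; exact absurd hq2 (by decide)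

lemma lexLt_shift {u v : ℕ → Bool} {s : ℕ} (hag : ∀ j, j < s → u j = v j) :
    lexLt u v ↔ lexLt (shiftTail u s) (shiftTail v s) := by
  constructor
  · rintro ⟨q, h1, h2⟩
    have hqs : s ≤ q := by
      by_contra hc; push_neg at hc
      rw [hag q hc] at h2; exact lt_irrefl _ h2
    refine ⟨q - s, fun m hm => h1 _ (by omega), ?_⟩
    show u (s + (q - s)) < v (s + (q - s))
    have heq : s + (q - s) = q := by omega
    rw [heq]; exact h2
  · rintro ⟨q, h1, h2⟩
    refine ⟨s + q, fun m hm => ?_, h2⟩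
    by_cases hms : m < s
    · exact hag m hms
    · have h3 : u (s + (m - s)) = v (s + (m - s)) := h1 (m - s) (by omega)
      have h4 : s + (m - s) = m := by omega
      rwa [h4] at h3

lemma lexLe_shift {u v : ℕ → Bool} {s : ℕ} (hag : ∀ j, j < s → u j = v j) :
    lexLe u v ↔ lexLe (shiftTail u s) (shiftTail v s) := by
  constructor
  · rintro (h | h)
    · exact Or.inl ((lexLt_shift hag).mp h)
    · exact Or.inr (by rw [h])
  · rintro (h | h)
    · exact Or.inl ((lexLt_shift hag).mpr h)
    · refine Or.inr (funext fun m => ?_)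
      by_cases hms : m < s
      · exact hag m hms
      · have h5 := congrFun h (m - s)
        have h4 : s + (m - s) = m := by omega
        simpa [shiftTail, h4] using h5

lemma lexLe_decide_or_agree {u v : ℕ → Bool} (h : lexLe u v) (s : ℕ) :
    (∃ q, q < s ∧ (∀ m, m < q → u m = v m) ∧ u q = false ∧ v q = true) ∨
    (∀ j, j < s → u j = v j) := by
  rcases h with h | h
  · obtain ⟨q, hag, hu, hv⟩ := lexLt_elim h
    by_cases hq : q < s
    · exact Or.inl ⟨q, hq, hag, hu, hv⟩
    · exact Or.inr fun j hj => hag j (by omega)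
  · exact Or.inr fun j _ => by rw [h]

lemma omega_tail {a b i : ℕ → Bool} (h : i ∈ Omega a b) (p : ℕ) :
    lexLe (shiftTail i p) a ∨ lexLe b (shiftTail i p) := by
  by_cases h1 : lexLt a (shiftTail i p)
  · exact Or.inr (lexLe_of_not_lt fun h2 => (h p) ⟨h1, h2⟩)
  · exact Or.inl (lexLe_of_not_lt h1)

lemma mem_Lwords_iff {a b : ℕ → Bool} {n : ℕ} {w : Fin n → Bool} :
    w ∈ Lwords a b n ↔ ∃ i ∈ Omega a b, ∀ k : Fin n, i k.1 = w k := by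
  rw [Lwords, Set.Finite.mem_toFinset]; exact Iff.rfl

lemma mem_Qwords_iff {a b : ℕ → Bool} {n : ℕ} {w : Fin n → Bool} :
    w ∈ Qwords a b n ↔
      w ∈ Lwords a b n ∧ finConcat w a ∈ Omega a b ∧ finConcat w b ∈ Omega a b := by
  rw [Qwords, Set.Finite.mem_toFinset]; exact Iff.rfl

lemma main_a (a b : ℕ → Bool) (hW : memW a b) (n : ℕ) (hn : 1 ≤ n)
    (w : Fin n → Bool) (hw : w ∈ Lwords a b n) (hne : ¬ ∀ j : Fin n, w j = true) :
    ∃! k : ℕ, ∃ h : k < n,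
        ((fun j : Fin k => w ⟨j.1, j.2.trans h⟩) ∈ Qwords a b k) ∧
        (∀ j : Fin n, k ≤ j.1 → w j = a (j.1 - k)) := by
  classical
  obtain ⟨ha0, hb0, haO, hbO⟩ := hW
  obtain ⟨i, hiO, hiw⟩ := mem_Lwords_iff.mp hw
  -- uniqueness
  have huniq : ∀ k1 k2 : ℕ, k1 < k2 →
      (∃ h : k1 < n, ((fun j : Fin k1 => w ⟨j.1, j.2.trans h⟩) ∈ Qwords a b k1) ∧
        (∀ j : Fin n, k1 ≤ j.1 → w j = a (j.1 - k1))) →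
      (∃ h : k2 < n, ((fun j : Fin k2 => w ⟨j.1, j.2.trans h⟩) ∈ Qwords a b k2) ∧
        (∀ j : Fin n, k2 ≤ j.1 → w j = a (j.1 - k2))) → False := by
    rintro k1 k2 hlt ⟨h1, hQ1, hT1⟩ ⟨h2, hQ2, hT2⟩
    obtain ⟨-, -, hub⟩ := mem_Qwords_iff.mp hQ2
    have hub' : ∀ p : ℕ, ¬ (lexLt a (shiftTail (finConcat (fun j : Fin k2 => w ⟨j.1, j.2.trans h2⟩) b) p) ∧
        lexLt (shiftTail (finConcat (fun j : Fin k2 => w ⟨j.1, j.2.trans h2⟩) b) p) b) := hub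
    have hval : ∀ j, j < k2 - k1 →
        shiftTail (finConcat (fun j : Fin k2 => w ⟨j.1, j.2.trans h2⟩) b) k1 j = a j := by
      intro j hj
      show finConcat (fun j : Fin k2 => w ⟨j.1, j.2.trans h2⟩) b (k1 + j) = a j
      have hjk : k1 + j < k2 := by omega
      simp only [finConcat, dif_pos hjk]
      have h5 := hT1 ⟨k1 + j, hjk.trans h2⟩ (Nat.le_add_right k1 j)
      rw [show k1 + j - k1 = j from by omega] at h5
      exact h5
    have hmam : a (k2 - k1) = false := by
      have e1 := hT1 ⟨k2, h2⟩ (le_of_lt hlt)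
      have e2 := hT2 ⟨k2, h2⟩ le_rfl
      rw [Nat.sub_self] at e2
      rw [← e1, e2]; exact ha0
    have hmid : shiftTail (finConcat (fun j : Fin k2 => w ⟨j.1, j.2.trans h2⟩) b) k1 (k2 - k1) = true := by
      show finConcat (fun j : Fin k2 => w ⟨j.1, j.2.trans h2⟩) b (k1 + (k2 - k1)) = true
      rw [show k1 + (k2 - k1) = k2 from by omega]
      simp only [finConcat, dif_neg (lt_irrefl k2), Nat.sub_self]
      exact hb0
    exact hub' k1 ⟨lexLt_intro (k2 - k1) (fun m hm => (hval m hm).symm) hmam hmid,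
      lexLt_intro 0 (fun m hm => absurd hm (Nat.not_lt_zero m))
        (by rw [hval 0 (by omega)]; exact ha0) hb0⟩
  -- T nonempty
  have hj0 : ∃ j : Fin n, w j = false := by
    by_contra hc; push_neg at hc
    exact hne fun j => by have h5 := hc j; revert h5; cases w j <;> simp
  obtain ⟨j0, hj0⟩ := hj0
  have hTne : ∃ k, k < n ∧ ∀ j, k ≤ j → j < n → i j = a (j - k) := by
    have hk0P : i (Nat.findGreatest (fun m => i m = false) (n - 1)) = false :=
      Nat.findGreatest_spec (P := fun m => i m = false) (m := j0.1)
        (by have := j0.2; omega) (by show i j0.1 = false; rw [hiw j0]; exact hj0)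
    have hk0n : Nat.findGreatest (fun m => i m = false) (n - 1) < n := by
      have h5 := Nat.findGreatest_le (P := fun m => i m = false) (n := n - 1)
      omega
    have hmax : ∀ m, Nat.findGreatest (fun m => i m = false) (n - 1) < m → m < n → i m = true := by
      intro m hm1 hm2
      have h5 : ¬ i m = false :=
        Nat.findGreatest_is_greatest (P := fun m => i m = false) (n := n - 1) (k := m) hm1 (by omega)
      revert h5; cases i m <;> simp
    set k0 := Nat.findGreatest (fun m => i m = false) (n - 1) with hk0def
    refine ⟨k0, hk0n, ?_⟩
    rcases omega_tail hiO k0 with hxa | hbx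
    · rcases lexLe_decide_or_agree hxa (n - k0) with ⟨q, hq, hagq, hxq, haq⟩ | hagr
      · exfalso
        rcases Nat.eq_zero_or_pos q with hq0 | hq0
        · subst hq0; rw [ha0] at haq; exact absurd haq (by decide)
        · have h5 : i (k0 + q) = true := hmax _ (by omega) (by omega)
          rw [show shiftTail i k0 q = i (k0 + q) from rfl, h5] at hxq
          exact absurd hxq (by decide)
      · intro j hj1 hj2
        have h5 := hagr (j - k0) (by omega)
        rw [show shiftTail i k0 (j - k0) = i (k0 + (j - k0)) from rfl,
          show k0 + (j - k0) = j from by omega] at h5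
        exact h5
    · exfalso
      have h5 : lexLt (shiftTail i k0) b :=
        lexLt_intro 0 (fun m hm => absurd hm (Nat.not_lt_zero m))
          (by rw [show shiftTail i k0 0 = i (k0 + 0) from rfl, Nat.add_zero]; exact hk0P) hb0
      exact lexLe_lexLt_false hbx h5
  set k := Nat.find hTne with hkdef
  obtain ⟨hkn, hkT⟩ : k < n ∧ ∀ j, k ≤ j → j < n → i j = a (j - k) := Nat.find_spec hTne
  have hkmin : ∀ p, p < k → ¬ (p < n ∧ ∀ j, p ≤ j → j < n → i j = a (j - p)) :=
    fun p hp => Nat.find_min hTne hp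
  -- Omega membership of the two concatenations, abstractly
  have hgaO : ∀ g : ℕ → Bool, (∀ m, g m = if m < k then i m else a (m - k)) → g ∈ Omega a b := by
    intro g hg p hcon
    by_cases hpk : p < k
    case neg =>
      push_neg at hpk
      have hst : shiftTail g p = shiftTail a (p - k) := by
        funext m
        rw [show shiftTail g p m = g (p + m) from rfl, hg (p + m), if_neg (by omega),
          show shiftTail a (p - k) m = a (p - k + m) from rfl]
        congr 1; omega
      rw [hst] at hcon
      exact haO (p - k) hcon
    case pos =>
    have hy1 : ∀ m, m < k - p → shiftTail g p m = i (p + m) := by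
      intro m hm; rw [show shiftTail g p m = g (p + m) from rfl, hg, if_pos (by omega)]
    have hy2 : ∀ m, k - p ≤ m → shiftTail g p m = a (m - (k - p)) := by
      intro m hm; rw [show shiftTail g p m = g (p + m) from rfl, hg, if_neg (by omega)]
      congr 1; omega
    have hx2 : ∀ m, k - p ≤ m → m < n - p → shiftTail i p m = a (m - (k - p)) := by
      intro m h1 h2
      rw [show shiftTail i p m = i (p + m) from rfl, hkT (p + m) (by omega) (by omega)]
      congr 1; omega
    have hxy : ∀ m, m < n - p → shiftTail g p m = shiftTail i p m := by
      intro m hm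
      by_cases h1 : m < k - p
      · rw [hy1 m h1]; rfl
      · push_neg at h1; rw [hy2 m h1, hx2 m h1 hm]
    rcases omega_tail hiO p with hxa | hbx
    · rcases lexLe_decide_or_agree hxa (n - p) with ⟨q, hq, hagq, hxq, haq⟩ | hagr
      · refine lexLt_asymm hcon.1 (lexLt_intro q (fun m hm => ?_) ?_ haq)
        · rw [hxy m (by omega)]; exact hagq m hm
        · rw [hxy q hq]; exact hxq
      · refine hkmin p hpk ⟨by omega, fun j hj1 hj2 => ?_⟩
        have h5 := hagr (j - p) (by omega)
        rw [show shiftTail i p (j - p) = i (p + (j - p)) from rfl,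
          show p + (j - p) = j from by omega] at h5
        exact h5
    · rcases lexLe_decide_or_agree hbx (n - p) with ⟨q, hq, hagq, hbq, hxq⟩ | hagr
      · refine lexLt_asymm hcon.2 (lexLt_intro q (fun m hm => ?_) hbq ?_)
        · rw [hxy m (by omega)]; exact hagq m hm
        · rw [hxy q hq]; exact hxq
      · have hagyb : ∀ j, j < k - p → shiftTail g p j = b j := fun j hj => by
          rw [hxy j (by omega)]; exact (hagr j (by omega)).symm
        have h1 := (lexLt_shift hagyb).mp hcon.2
        have h2 : shiftTail (shiftTail g p) (k - p) = a := by
          funext m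
          rw [show shiftTail (shiftTail g p) (k - p) m = shiftTail g p ((k - p) + m) from rfl,
            hy2 _ (by omega)]
          congr 1; omega
        rw [h2] at h1
        rcases omega_tail hbO (k - p) with h3 | h3
        · exact lexLe_lexLt_false h3 h1
        · have hbs : b (k - p) = false := by
            have h4 := hagr (k - p) (by omega)
            rw [hx2 (k - p) le_rfl (by omega), Nat.sub_self] at h4
            rw [h4]; exact ha0
          have h5 : lexLt (shiftTail b (k - p)) b :=
            lexLt_intro 0 (fun m hm => absurd hm (Nat.not_lt_zero m))
              (by rw [show shiftTail b (k - p) 0 = b ((k - p) + 0) from rfl, Nat.add_zero]; exact hbs) hb0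
          exact lexLe_lexLt_false h3 h5
  have hgbO : ∀ g : ℕ → Bool, (∀ m, g m = if m < k then i m else b (m - k)) → g ∈ Omega a b := by
    intro g hg p hcon
    by_cases hpk : p < k
    case neg =>
      push_neg at hpk
      have hst : shiftTail g p = shiftTail b (p - k) := by
        funext m
        rw [show shiftTail g p m = g (p + m) from rfl, hg (p + m), if_neg (by omega),
          show shiftTail b (p - k) m = b (p - k + m) from rfl]
        congr 1; omega
      rw [hst] at hcon
      exact hbO (p - k) hcon
    case pos =>
    have hz1 : ∀ m, m < k - p → shiftTail g p m = i (p + m) := by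
      intro m hm; rw [show shiftTail g p m = g (p + m) from rfl, hg, if_pos (by omega)]
    have hz2 : ∀ m, k - p ≤ m → shiftTail g p m = b (m - (k - p)) := by
      intro m hm; rw [show shiftTail g p m = g (p + m) from rfl, hg, if_neg (by omega)]
      congr 1; omega
    have hx2 : ∀ m, k - p ≤ m → m < n - p → shiftTail i p m = a (m - (k - p)) := by
      intro m h1 h2
      rw [show shiftTail i p m = i (p + m) from rfl, hkT (p + m) (by omega) (by omega)]
      congr 1; omega
    have hzb : shiftTail (shiftTail g p) (k - p) = b := by
      funext m
      rw [show shiftTail (shiftTail g p) (k - p) m = shiftTail g p ((k - p) + m) from rfl,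
        hz2 _ (by omega)]
      congr 1; omega
    rcases omega_tail hiO p with hxa | hbx
    · rcases lexLe_decide_or_agree hxa (k - p) with ⟨q, hq, hagq, hxq, haq⟩ | hags
      · refine lexLt_asymm hcon.1 (lexLt_intro q (fun m hm => ?_) ?_ haq)
        · rw [hz1 m (by omega)]; exact hagq m hm
        · rw [hz1 q hq]; exact hxq
      · rcases omega_tail haO (k - p) with h3 | h3
        · rcases lexLe_decide_or_agree h3 (n - k) with ⟨q', hq', hagq', hsq', haq'⟩ | hagnk
          · refine lexLe_lexLt_false hxa (lexLt_intro ((k - p) + q') (fun m hm => ?_) ?_ ?_)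
            · by_cases h4 : m < k - p
              · exact (hags m h4).symm
              · push_neg at h4
                have h5 := hagq' (m - (k - p)) (by omega)
                rw [show shiftTail a (k - p) (m - (k - p)) = a ((k - p) + (m - (k - p))) from rfl,
                  show (k - p) + (m - (k - p)) = m from by omega] at h5
                rw [hx2 m h4 (by omega)]
                exact h5
            · rw [show a ((k - p) + q') = shiftTail a (k - p) q' from rfl]; exact hsq'
            · rw [hx2 _ (by omega) (by omega),
                show (k - p) + q' - (k - p) = q' from by omega]
              exact haq'
          · refine absurd ⟨by omega, fun j hj1 hj2 => ?_⟩ (hkmin p hpk)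
            by_cases h4 : j < k
            · have h5 := hags (j - p) (by omega)
              rw [show shiftTail i p (j - p) = i (p + (j - p)) from rfl,
                show p + (j - p) = j from by omega] at h5
              exact h5
            · push_neg at h4
              have h5 := hagnk (j - k) (by omega)
              rw [show shiftTail a (k - p) (j - k) = a ((k - p) + (j - k)) from rfl,
                show (k - p) + (j - k) = j - p from by omega] at h5
              rw [hkT j (by omega) hj2]
              exact h5.symm
        · have hagza : ∀ j, j < k - p → shiftTail g p j = a j := fun j hj => by
            rw [hz1 j hj]; exact hags j hj
          have h5 : lexLe (shiftTail g p) a := (lexLe_shift hagza).mpr (by rw [hzb]; exact h3)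
          exact lexLe_lexLt_false h5 hcon.1
    · rcases lexLe_decide_or_agree hbx (k - p) with ⟨q, hq, hagq, hbq, hxq⟩ | hags
      · refine lexLt_asymm hcon.2 (lexLt_intro q (fun m hm => ?_) hbq ?_)
        · rw [hz1 m (by omega)]; exact hagq m hm
        · rw [hz1 q hq]; exact hxq
      · have h1 : lexLe (shiftTail b (k - p)) (shiftTail (shiftTail i p) (k - p)) :=
          (lexLe_shift (fun j hj => hags j hj)).mp hbx
        have h2 : shiftTail (shiftTail i p) (k - p) 0 = false := by
          rw [show shiftTail (shiftTail i p) (k - p) 0 = shiftTail i p ((k - p) + 0) from rfl,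
            Nat.add_zero, hx2 (k - p) le_rfl (by omega), Nat.sub_self]
          exact ha0
        have hbs : b (k - p) = false := by
          by_contra hc
          have hc' : b (k - p) = true := by revert hc; cases b (k - p) <;> simp
          have h6 : lexLt (shiftTail (shiftTail i p) (k - p)) (shiftTail b (k - p)) :=
            lexLt_intro 0 (fun m hm => absurd hm (Nat.not_lt_zero m)) h2
              (by rw [show shiftTail b (k - p) 0 = b ((k - p) + 0) from rfl, Nat.add_zero]; exact hc')
          exact lexLe_lexLt_false h1 h6
        have hagzb : ∀ j, j < k - p → shiftTail g p j = b j := fun j hj => by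
          rw [hz1 j hj]; exact (hags j hj).symm
        have h3 := (lexLt_shift hagzb).mp hcon.2
        rw [hzb] at h3
        have h5 : lexLt (shiftTail b (k - p)) b :=
          lexLt_intro 0 (fun m hm => absurd hm (Nat.not_lt_zero m))
            (by rw [show shiftTail b (k - p) 0 = b ((k - p) + 0) from rfl, Nat.add_zero]; exact hbs) hb0
        exact lexLt_asymm h3 h5
  -- assemble
  have hQ : (fun j : Fin k => w ⟨j.1, j.2.trans hkn⟩) ∈ Qwords a b k := by
    refine mem_Qwords_iff.mpr ⟨?_, ?_, ?_⟩
    · exact mem_Lwords_iff.mpr ⟨i, hiO, fun m => hiw ⟨m.1, m.2.trans hkn⟩⟩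
    · refine hgaO _ fun m => ?_
      by_cases h : m < k
      · rw [if_pos h]; simp only [finConcat, dif_pos h]; exact (hiw ⟨m, h.trans hkn⟩).symm
      · rw [if_neg h]; simp only [finConcat, dif_neg h]
    · refine hgbO _ fun m => ?_
      by_cases h : m < k
      · rw [if_pos h]; simp only [finConcat, dif_pos h]; exact (hiw ⟨m, h.trans hkn⟩).symm
      · rw [if_neg h]; simp only [finConcat, dif_neg h]
  refine ⟨k, ⟨hkn, hQ, fun j hj => ?_⟩, ?_⟩
  · rw [← hiw j]; exact hkT j.1 hj j.2
  · intro y hy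
    rcases lt_trichotomy y k with h | h | h
    · exact (huniq y k h hy ⟨hkn, hQ, fun j hj => by rw [← hiw j]; exact hkT j.1 hj j.2⟩).elim
    · exact h
    · exact (huniq k y h ⟨hkn, hQ, fun j hj => by rw [← hiw j]; exact hkT j.1 hj j.2⟩ hy).elim

lemma lexLt_neg' {u v : ℕ → Bool} (h : lexLt u v) :
    lexLt (fun m => !(v m)) (fun m => !(u m)) := by
  obtain ⟨q, hag, hu, hv⟩ := lexLt_elim h
  exact lexLt_intro q (fun m hm => by rw [hag m hm]) (by simp [hv]) (by simp [hu])

lemma lexLt_neg_mp {u v : ℕ → Bool} (h : lexLt (fun m => !(v m)) (fun m => !(u m))) :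
    lexLt u v := by
  have := lexLt_neg' h
  simpa only [Bool.not_not] using this

lemma omega_neg' {a b i : ℕ → Bool} (h : i ∈ Omega a b) :
    (fun m => !(i m)) ∈ Omega (fun m => !(b m)) (fun m => !(a m)) := by
  intro p hp
  have h1 : lexLt a (shiftTail i p) := lexLt_neg_mp hp.2
  have h2 : lexLt (shiftTail i p) b := lexLt_neg_mp hp.1
  exact h p ⟨h1, h2⟩

lemma memW_neg {a b : ℕ → Bool} (h : memW a b) :
    memW (fun m => !(b m)) (fun m => !(a m)) := by
  obtain ⟨h0, h1, h2, h3⟩ := h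
  exact ⟨by simp [h1], by simp [h0], omega_neg' h3, omega_neg' h2⟩

lemma lwords_neg' {a b : ℕ → Bool} {n : ℕ} {w : Fin n → Bool} (h : w ∈ Lwords a b n) :
    (fun j => !(w j)) ∈ Lwords (fun m => !(b m)) (fun m => !(a m)) n := by
  obtain ⟨i, hi, hiw⟩ := mem_Lwords_iff.mp h
  exact mem_Lwords_iff.mpr ⟨fun m => !(i m), omega_neg' hi,
    fun m => by simp only []; rw [hiw m]⟩

lemma finConcat_neg {n : ℕ} (w : Fin n → Bool) (x : ℕ → Bool) :
    finConcat (fun j => !(w j)) (fun m => !(x m)) = fun m => !(finConcat w x m) := by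
  funext m
  by_cases h : m < n <;> simp [finConcat, h]

lemma qwords_neg' {a b : ℕ → Bool} {k : ℕ} {w : Fin k → Bool} (h : w ∈ Qwords a b k) :
    (fun j => !(w j)) ∈ Qwords (fun m => !(b m)) (fun m => !(a m)) k := by
  obtain ⟨hL, hA, hB⟩ := mem_Qwords_iff.mp h
  refine mem_Qwords_iff.mpr ⟨lwords_neg' hL, ?_, ?_⟩
  · rw [finConcat_neg]; exact omega_neg' hB
  · rw [finConcat_neg]; exact omega_neg' hA

lemma qwords_neg_mp {a b : ℕ → Bool} {k : ℕ} {w : Fin k → Bool}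
    (h : (fun j => !(w j)) ∈ Qwords (fun m => !(b m)) (fun m => !(a m)) k) :
    w ∈ Qwords a b k := by
  have := qwords_neg' h
  simpa only [Bool.not_not] using this


/-- Lemma 2.3: for `(a,b) ∈ W` and a word `i₁⋯iₙ ∈ L_{a,b,n}` (`n ≥ 1`):
(i) if `i₁⋯iₙ ≠ 1^n`, there is a unique `0 ≤ k < n` with `i₁⋯i_k ∈ Q_{a,b,k}` and
`i_{k+1}⋯iₙ = a₁⋯a_{n−k}`; (ii) if `i₁⋯iₙ ≠ 0^n`, there is a unique `0 ≤ k < n` with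
`i₁⋯i_k ∈ Q_{a,b,k}` and `i_{k+1}⋯iₙ = b₁⋯b_{n−k}`. -/
theorem stmt13 (a b : ℕ → Bool) (hW : memW a b) (n : ℕ) (hn : 1 ≤ n)
    (w : Fin n → Bool) (hw : w ∈ Lwords a b n) :
    ((¬ ∀ j : Fin n, w j = true) →
      ∃! k : ℕ, ∃ h : k < n,
        ((fun j : Fin k => w ⟨j.1, j.2.trans h⟩) ∈ Qwords a b k) ∧
        (∀ j : Fin n, k ≤ j.1 → w j = a (j.1 - k))) ∧
    ((¬ ∀ j : Fin n, w j = false) →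
      ∃! k : ℕ, ∃ h : k < n,
        ((fun j : Fin k => w ⟨j.1, j.2.trans h⟩) ∈ Qwords a b k) ∧
        (∀ j : Fin n, k ≤ j.1 → w j = b (j.1 - k))) := by
  constructor
  · intro hne
    exact main_a a b hW n hn w hw hne
  · intro hne
    have hne' : ¬ ∀ j : Fin n, (!(w j)) = true := by
      intro hc
      exact hne fun j => by have h5 := hc j; revert h5; cases w j <;> simp
    obtain ⟨k, ⟨hkn, hQ, hT⟩, huq⟩ := main_a (fun m => !(b m)) (fun m => !(a m))
      (memW_neg hW) n hn (fun j => !(w j)) (lwords_neg' hw) hne'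
    refine ⟨k, ⟨hkn, ?_, ?_⟩, ?_⟩
    · exact qwords_neg_mp (w := fun j : Fin k => w ⟨j.1, j.2.trans hkn⟩) hQ
    · intro j hj
      have h2 : (!(w j)) = (!(b (j.1 - k))) := hT j hj
      revert h2; cases w j <;> cases b (j.1 - k) <;> simp
    · rintro y ⟨hy, hQy, hTy⟩
      refine huq y ⟨hy, ?_, ?_⟩
      · exact qwords_neg' hQy
      · intro j hj
        show (!(w j)) = (!(b (j.1 - y)))
        rw [hTy j hj]
end

section
/- Let a, b ∈ {0,1}^ℕ with a ⪯ b. Then Ω_{ℓ_{a,b}, r_{a,b}} = Ω_{a,b}; in particular, ℓ_{a,b} and r_{a,b} belong to Ω_{ℓ_{a,b}, r_{a,b}}. -/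
open Filter Topology

/-- `l = ℓ_{a,b}`, the maximum of `{u ∈ Ω_{a,b} : u ⪯ a}`. -/
def isLeftMax (a b l : ℕ → Bool) : Prop :=
  l ∈ Omega a b ∧ lexLe l a ∧ ∀ u ∈ Omega a b, lexLe u a → lexLe u l

/-- `r = r_{a,b}`, the minimum of `{u ∈ Ω_{a,b} : u ⪰ b}`. -/
def isRightMin (a b r : ℕ → Bool) : Prop :=
  r ∈ Omega a b ∧ lexLe b r ∧ ∀ u ∈ Omega a b, lexLe b u → lexLe r u


lemma lexLt_trans {u v w : ℕ → Bool} (h1 : lexLt u v) (h2 : lexLt v w) : lexLt u w := by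
  obtain ⟨n, hpn, hn⟩ := h1
  obtain ⟨m, hpm, hm⟩ := h2
  refine ⟨min n m, fun k hk => ?_, ?_⟩
  · rw [hpn k (lt_of_lt_of_le hk (min_le_left _ _)),
      hpm k (lt_of_lt_of_le hk (min_le_right _ _))]
  · rcases lt_trichotomy n m with h | h | h
    · rw [min_eq_left h.le, ← hpm n h]; exact hn
    · subst h; rw [min_self]; exact hn.trans hm
    · rw [min_eq_right h.le, hpn m h]; exact hm

lemma lexLt_irrefl {u : ℕ → Bool} (h : lexLt u u) : False := by
  obtain ⟨n, _, hn⟩ := h; exact lt_irrefl _ hn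

lemma lexLt_total {u v : ℕ → Bool} (h : u ≠ v) : lexLt u v ∨ lexLt v u := by
  have hex : ∃ n, u n ≠ v n := by
    by_contra hc
    push_neg at hc
    exact h (funext hc)
  classical
  let n := Nat.find hex
  have hn : u n ≠ v n := Nat.find_spec hex
  have hp : ∀ m, m < n → u m = v m := fun m hm => by
    have := Nat.find_min hex hm; simpa using this
  rcases hn.lt_or_gt with h' | h'
  · exact Or.inl ⟨n, hp, h'⟩
  · exact Or.inr ⟨n, fun m hm => (hp m hm).symm, h'⟩

lemma lexLe_lexLt_trans {u v w : ℕ → Bool} (h1 : lexLe u v) (h2 : lexLt v w) : lexLt u w := by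
  rcases h1 with h1 | rfl
  · exact lexLt_trans h1 h2
  · exact h2

lemma lexLt_lexLe_trans {u v w : ℕ → Bool} (h1 : lexLt u v) (h2 : lexLe v w) : lexLt u w := by
  rcases h2 with h2 | rfl
  · exact lexLt_trans h1 h2
  · exact h1

lemma shiftTail_shiftTail (i : ℕ → Bool) (n m : ℕ) :
    shiftTail (shiftTail i n) m = shiftTail i (n + m) := by
  funext k; simp [shiftTail, Nat.add_assoc]

lemma shiftTail_zero (i : ℕ → Bool) : shiftTail i 0 = i := by
  funext k; simp [shiftTail]

lemma Omega_shift {a b : ℕ → Bool} {i : ℕ → Bool} (hi : i ∈ Omega a b) (n : ℕ) :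
    shiftTail i n ∈ Omega a b := fun m => by
  rw [shiftTail_shiftTail]; exact hi (n + m)

/-- Lemma 2.7: for `a ⪯ b`, `Ω_{ℓ_{a,b}, r_{a,b}} = Ω_{a,b}`; in particular
`ℓ_{a,b}, r_{a,b} ∈ Ω_{ℓ_{a,b}, r_{a,b}}`. -/
theorem stmt16 (a b l r : ℕ → Bool) (hab : lexLe a b)
    (hl : isLeftMax a b l) (hr : isRightMin a b r) :
    Omega l r = Omega a b ∧ l ∈ Omega l r ∧ r ∈ Omega l r := by
  have key : Omega l r = Omega a b := by
    ext i
    constructor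
    · intro hi n ⟨h1, h2⟩
      exact hi n ⟨lexLe_lexLt_trans hl.2.1 h1, lexLt_lexLe_trans h2 hr.2.1⟩
    · intro hi n ⟨h1, h2⟩
      set u := shiftTail i n with hu
      have hmem : u ∈ Omega a b := Omega_shift hi n
      by_cases hua : lexLe u a
      · exact lexLt_irrefl (lexLe_lexLt_trans (hl.2.2 u hmem hua) h1)
      have h' : lexLt a u := by
        have hne : u ≠ a := fun h => hua (Or.inr h)
        rcases lexLt_total hne with h | h
        · exact absurd (Or.inl h) hua
        · exact h
      -- a ≺ u, so u ∉ ]a,b[, so b ⪯ u, so r ⪯ u, contra u ≺ r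
      · {
        have hub : ¬ lexLt u b := fun hub => hmem 0 (by rw [shiftTail_zero]; exact ⟨h', hub⟩)
        have hbu : lexLe b u := by
          by_cases hbe : b = u
          · exact Or.inr hbe
          · rcases lexLt_total hbe with h | h
            · exact Or.inl h
            · exact absurd h hub
        exact lexLt_irrefl (lexLt_lexLe_trans h2 (hr.2.2 u hmem hbu)) }
  exact ⟨key, key ▸ hl.1, key ▸ hr.1⟩
end
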